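/- Let λ ≥ 1, let ι be an index type, and let (X_i)_{i∈ι} be a family of real Banach spaces each of which is an absolute λ-Lipschitz retract: for every metric space Z and every isometric embedding j : X_i → Z there exists a λ-Lipschitz map r : Z → X_i with r(j(x)) = x for all x ∈ X_i. Then the ℓ∞-sum lp X ∞ (families (x_i) with sup_i ‖x_i‖ < ∞, with the supremum norm) is an absolute λ-Lipschitz retract. -/

import Mathlib

open Cardinal

/-- A metric space `X` is an absolute `λ`-Lipschitz retract if for every metric space `Z`
and every isometric embedding `j : X → Z` there is a `λ`-Lipschitz map `r : Z → X` with
`r ∘ j = id`. -/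
def IsAbsoluteLipschitzRetract.{z, x} (lam : NNReal) (X : Type x) [MetricSpace X] : Prop :=
  ∀ (Z : Type z) [MetricSpace Z] (j : X → Z), Isometry j →
    ∃ r : Z → X, LipschitzWith lam r ∧ ∀ x : X, r (j x) = x

/-- Auxiliary type: two copies of `Z`, used to glue `Z` with a copy of `X` embedded in `Z`. -/
structure GluePt (Z : Type*) where
  side : Bool
  pt : Z

open ENNReal in
/-- Lipschitz extension lemma: if `X` is an absolute `lam`-Lipschitz retract (for spaces in
universe `z'`), `j : T → Z` is an isometric embedding, `g : T → X` is `1`-Lipschitz, and `X`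
admits an isometric embedding `ψ` into `Z` (needed to stay within universe `z'`), then `g`
extends (through `j`) to a `lam`-Lipschitz map `F : Z → X`. -/
theorem glue_extend.{z', x', t'} {Z : Type z'} [MetricSpace Z] {X : Type x'} [MetricSpace X]
    {T : Type t'} [MetricSpace T] [Nonempty T]
    (lam : NNReal) (hX : IsAbsoluteLipschitzRetract.{z', x'} lam X)
    (j : T → Z) (hj : Isometry j)
    (g : T → X) (hg : LipschitzWith 1 g)
    (ψ : X → Z) (hψ : Isometry ψ) :
    ∃ F : Z → X, LipschitzWith lam F ∧ ∀ t, F (j t) = g t := by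
  classical
  -- key contraction inequality
  have key : ∀ t t' : T, edist (ψ (g t)) (ψ (g t')) ≤ edist (j t) (j t') := by
    intro t t'
    rw [hψ.edist_eq, hj.edist_eq]
    simpa using hg t t'
  set M : Z → Z → ℝ≥0∞ := fun z a => ⨅ t : T, edist z (j t) + edist (ψ (g t)) a with hM
  set C : Z → Z → ℝ≥0∞ := fun z z' =>
    ⨅ t : T, ⨅ t' : T, edist z (j t) + edist (ψ (g t)) (ψ (g t')) + edist (j t') z' with hC
  have M_le : ∀ (z a : Z) (t : T), M z a ≤ edist z (j t) + edist (ψ (g t)) a := by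
    intro z a t; exact iInf_le _ t
  have C_le : ∀ (z z' : Z) (t t' : T),
      C z z' ≤ edist z (j t) + edist (ψ (g t)) (ψ (g t')) + edist (j t') z' := by
    intro z z' t t'; exact le_trans (iInf_le _ t) (iInf_le _ t')
  -- symmetry of M-pairs and C
  have hCsymm : ∀ z z', C z z' = C z' z := by
    intro z z'
    apply le_antisymm <;>
    · rw [hC]
      refine le_iInf fun t => le_iInf fun t' => ?_
      refine le_trans (C_le _ _ t' t) (le_of_eq ?_)
      simp only [edist_comm]
      ring
  -- the eight basic inequalities
  have h1 : ∀ z z' z'', C z z'' ≤ edist z z' + C z' z'' := by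
    intro z z' z''
    rw [ENNReal.add_iInf]
    refine le_iInf fun t => ?_
    rw [ENNReal.add_iInf]
    refine le_iInf fun t' => ?_
    refine le_trans (C_le z z'' t t') ?_
    calc edist z (j t) + edist (ψ (g t)) (ψ (g t')) + edist (j t') z''
        ≤ (edist z z' + edist z' (j t)) + edist (ψ (g t)) (ψ (g t')) + edist (j t') z'' := by
          gcongr; exact edist_triangle _ _ _
      _ = edist z z' + (edist z' (j t) + edist (ψ (g t)) (ψ (g t')) + edist (j t') z'') := by ring
  have h2 : ∀ z z' z'', C z z'' ≤ C z z' + edist z' z'' := by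
    intro z z' z''
    rw [hCsymm z z'', add_comm, edist_comm]
    rw [hCsymm z z']
    exact h1 _ _ _
  have h3 : ∀ z z' z'', C z z'' ≤ C z z' + C z' z'' := by
    intro z z' z''
    rw [ENNReal.iInf_add]
    refine le_iInf fun t => ?_
    rw [ENNReal.iInf_add]
    refine le_iInf fun t' => ?_
    rw [ENNReal.add_iInf]
    refine le_iInf fun s => ?_
    rw [ENNReal.add_iInf]
    refine le_iInf fun s' => ?_
    refine le_trans (C_le z z'' t s') ?_
    calc edist z (j t) + edist (ψ (g t)) (ψ (g s')) + edist (j s') z''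
        ≤ edist z (j t) + (edist (ψ (g t)) (ψ (g t')) + edist (ψ (g t')) (ψ (g s))
            + edist (ψ (g s)) (ψ (g s'))) + edist (j s') z'' := by
          gcongr
          calc edist (ψ (g t)) (ψ (g s')) ≤ edist (ψ (g t)) (ψ (g s)) + edist (ψ (g s)) (ψ (g s')) :=
                edist_triangle _ _ _
            _ ≤ (edist (ψ (g t)) (ψ (g t')) + edist (ψ (g t')) (ψ (g s)))
                + edist (ψ (g s)) (ψ (g s')) := by gcongr; exact edist_triangle _ _ _
      _ ≤ edist z (j t) + (edist (ψ (g t)) (ψ (g t')) + edist (j t') (j s)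
            + edist (ψ (g s)) (ψ (g s'))) + edist (j s') z'' := by gcongr; exact key _ _
      _ ≤ edist z (j t) + (edist (ψ (g t)) (ψ (g t')) + (edist (j t') z' + edist z' (j s))
            + edist (ψ (g s)) (ψ (g s'))) + edist (j s') z'' := by
          gcongr; exact edist_triangle _ _ _
      _ = (edist z (j t) + edist (ψ (g t)) (ψ (g t')) + edist (j t') z')
          + (edist z' (j s) + edist (ψ (g s)) (ψ (g s')) + edist (j s') z'') := by ring
  have h4 : ∀ z z' y, C z z' ≤ M z y + M z' y := by
    intro z z' y
    rw [ENNReal.iInf_add]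
    refine le_iInf fun t => ?_
    rw [ENNReal.add_iInf]
    refine le_iInf fun s => ?_
    refine le_trans (C_le z z' t s) ?_
    calc edist z (j t) + edist (ψ (g t)) (ψ (g s)) + edist (j s) z'
        ≤ edist z (j t) + (edist (ψ (g t)) y + edist y (ψ (g s))) + edist (j s) z' := by
          gcongr; exact edist_triangle _ _ _
      _ = (edist z (j t) + edist (ψ (g t)) y) + (edist z' (j s) + edist (ψ (g s)) y) := by
          rw [edist_comm y, edist_comm (j s)]; ring
  have h5 : ∀ z z' y, M z y ≤ edist z z' + M z' y := by
    intro z z' y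
    rw [ENNReal.add_iInf]
    refine le_iInf fun t => ?_
    refine le_trans (M_le z y t) ?_
    calc edist z (j t) + edist (ψ (g t)) y
        ≤ (edist z z' + edist z' (j t)) + edist (ψ (g t)) y := by
          gcongr; exact edist_triangle _ _ _
      _ = edist z z' + (edist z' (j t) + edist (ψ (g t)) y) := by ring
  have h6 : ∀ z z' y, M z y ≤ C z z' + M z' y := by
    intro z z' y
    rw [ENNReal.iInf_add]
    refine le_iInf fun t => ?_
    rw [ENNReal.iInf_add]
    refine le_iInf fun t' => ?_
    rw [ENNReal.add_iInf]
    refine le_iInf fun s => ?_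
    refine le_trans (M_le z y t) ?_
    calc edist z (j t) + edist (ψ (g t)) y
        ≤ edist z (j t) + (edist (ψ (g t)) (ψ (g t')) + edist (ψ (g t')) (ψ (g s))
            + edist (ψ (g s)) y) := by
          gcongr
          calc edist (ψ (g t)) y ≤ edist (ψ (g t)) (ψ (g s)) + edist (ψ (g s)) y :=
                edist_triangle _ _ _
            _ ≤ (edist (ψ (g t)) (ψ (g t')) + edist (ψ (g t')) (ψ (g s)))
                + edist (ψ (g s)) y := by gcongr; exact edist_triangle _ _ _
      _ ≤ edist z (j t) + (edist (ψ (g t)) (ψ (g t')) + edist (j t') (j s)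
            + edist (ψ (g s)) y) := by gcongr; exact key _ _
      _ ≤ edist z (j t) + (edist (ψ (g t)) (ψ (g t')) + (edist (j t') z' + edist z' (j s))
            + edist (ψ (g s)) y) := by gcongr; exact edist_triangle _ _ _
      _ = (edist z (j t) + edist (ψ (g t)) (ψ (g t')) + edist (j t') z')
          + (edist z' (j s) + edist (ψ (g s)) y) := by ring
  have h7 : ∀ z y y', M z y' ≤ M z y + edist y y' := by
    intro z y y'
    rw [ENNReal.iInf_add]
    refine le_iInf fun t => ?_
    refine le_trans (M_le z y' t) ?_
    calc edist z (j t) + edist (ψ (g t)) y'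
        ≤ edist z (j t) + (edist (ψ (g t)) y + edist y y') := by
          gcongr; exact edist_triangle _ _ _
      _ = edist z (j t) + edist (ψ (g t)) y + edist y y' := by ring
  have h8 : ∀ z y y', edist y y' ≤ M z y + M z y' := by
    intro z y y'
    rw [ENNReal.iInf_add]
    refine le_iInf fun t => ?_
    rw [ENNReal.add_iInf]
    refine le_iInf fun s => ?_
    calc edist y y'
        ≤ edist y (ψ (g t)) + edist (ψ (g t)) (ψ (g s)) + edist (ψ (g s)) y' := by
          refine le_trans (edist_triangle y (ψ (g s)) y') ?_
          gcongr; exact edist_triangle _ _ _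
      _ ≤ edist y (ψ (g t)) + edist (j t) (j s) + edist (ψ (g s)) y' := by
          gcongr; exact key _ _
      _ ≤ edist y (ψ (g t)) + (edist (j t) z + edist z (j s)) + edist (ψ (g s)) y' := by
          gcongr; exact edist_triangle _ _ _
      _ = (edist z (j t) + edist (ψ (g t)) y) + (edist z (j s) + edist (ψ (g s)) y') := by
          rw [edist_comm y, edist_comm (j t)]; ring
  -- the glued pseudo-emetric
  set D : GluePt Z → GluePt Z → ℝ≥0∞ := fun p q =>
    cond p.side (cond q.side (edist p.pt q.pt) (M q.pt p.pt))
      (cond q.side (M p.pt q.pt) (min (edist p.pt q.pt) (C p.pt q.pt))) with hD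
  have M_ne_top : ∀ z a, M z a ≠ ⊤ := by
    intro z a
    obtain ⟨t⟩ := ‹Nonempty T›
    exact ne_top_of_le_ne_top (ENNReal.add_ne_top.2 ⟨edist_ne_top _ _, edist_ne_top _ _⟩) (M_le z a t)
  letI instW0 : PseudoEMetricSpace (GluePt Z) :=
    { edist := D
      edist_self := by
        rintro ⟨side, z⟩
        cases side
        · exact le_antisymm (le_trans (min_le_left _ _) (le_of_eq (edist_self z))) zero_le
        · exact edist_self z
      edist_comm := by
        rintro ⟨s1, z1⟩ ⟨s2, z2⟩
        cases s1 <;> cases s2 <;> simp only [hD, cond] <;>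
          rw [edist_comm] <;> try rw [hCsymm]
      edist_triangle := by
        rintro ⟨s1, z1⟩ ⟨s2, z2⟩ ⟨s3, z3⟩
        cases s1 <;> cases s2 <;> cases s3 <;> simp only [hD, cond]
        -- fff
        · rcases le_total (edist z1 z2) (C z1 z2) with hm1 | hm1 <;>
            rcases le_total (edist z2 z3) (C z2 z3) with hm2 | hm2
          · rw [min_eq_left hm1, min_eq_left hm2]
            exact le_trans (min_le_left _ _) (edist_triangle _ _ _)
          · rw [min_eq_left hm1, min_eq_right hm2]
            exact le_trans (min_le_right _ _) (h1 _ _ _)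
          · rw [min_eq_right hm1, min_eq_left hm2]
            exact le_trans (min_le_right _ _) (h2 _ _ _)
          · rw [min_eq_right hm1, min_eq_right hm2]
            exact le_trans (min_le_right _ _) (h3 _ _ _)
        -- fft : min + M
        · rcases le_total (edist z1 z2) (C z1 z2) with hm1 | hm1
          · rw [min_eq_left hm1]; exact h5 _ _ _
          · rw [min_eq_right hm1]; exact h6 _ _ _
        -- ftf : min ≤ M + M
        · exact le_trans (min_le_right _ _) (h4 _ _ _)
        -- ftt : M z1 z3 ≤ M z1 z2 + edist z2 z3
        · exact h7 _ _ _
        -- tff : M z3 z1 ≤ M z2 z1 + min(edist z2 z3, C z2 z3)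
        · rcases le_total (edist z2 z3) (C z2 z3) with hm | hm
          · rw [min_eq_left hm, add_comm, edist_comm]
            exact h5 _ _ _
          · rw [min_eq_right hm, add_comm, hCsymm]
            exact h6 _ _ _
        -- tft : edist z1 z3 ≤ M z2 z1 + M z2 z3
        · exact h8 _ _ _
        -- ttf : M z3 z1 ≤ edist z1 z2 + M z3 z2
        · rw [add_comm, edist_comm z1 z2]
          exact h7 _ _ _
        -- ttt
        · exact edist_triangle _ _ _ }
  have hedist0 : ∀ p q : GluePt Z, edist p q = D p q := fun _ _ => rfl
  have hD_ne_top : ∀ p q : GluePt Z, edist p q ≠ ⊤ := by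
    rintro ⟨s1, z1⟩ ⟨s2, z2⟩
    rw [hedist0]
    cases s1 <;> cases s2 <;> simp only [hD, cond]
    · exact ne_top_of_le_ne_top (edist_ne_top _ _) (min_le_left _ _)
    · exact M_ne_top _ _
    · exact M_ne_top _ _
    · exact edist_ne_top _ _
  letI instW : MetricSpace (SeparationQuotient (GluePt Z)) :=
    EMetricSpace.toMetricSpace (by
      intro x y
      obtain ⟨p, rfl⟩ := SeparationQuotient.surjective_mk x
      obtain ⟨q, rfl⟩ := SeparationQuotient.surjective_mk y
      rw [SeparationQuotient.edist_mk]
      exact hD_ne_top p q)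
  have hedist_mk : ∀ p q : GluePt Z,
      @edist (SeparationQuotient (GluePt Z)) (@EMetricSpace.toPseudoEMetricSpace _ (@MetricSpace.toEMetricSpace _ instW)).toEDist
        (SeparationQuotient.mk p) (SeparationQuotient.mk q) = D p q :=
    fun p q => rfl
  -- the isometric embedding of X into W
  set j' : X → SeparationQuotient (GluePt Z) := fun v => SeparationQuotient.mk ⟨true, ψ v⟩ with hj'def
  have hj' : @Isometry X (SeparationQuotient (GluePt Z)) _
      (@EMetricSpace.toPseudoEMetricSpace _ (@MetricSpace.toEMetricSpace _ instW)) j' := by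
    intro v v'
    simp only [hj'def]
    rw [hedist_mk]
    show edist (ψ v) (ψ v') = edist v v'
    exact hψ.edist_eq v v'
  obtain ⟨r, hr, hret⟩ := hX (SeparationQuotient (GluePt Z)) j' hj'
  refine ⟨fun z => r (SeparationQuotient.mk ⟨false, z⟩), ?_, ?_⟩
  · intro z z'
    refine le_trans (hr _ _) ?_
    rw [hedist_mk]
    show (lam : ℝ≥0∞) * min (edist z z') (C z z') ≤ (lam : ℝ≥0∞) * edist z z'
    exact mul_le_mul_right (min_le_left _ _) _
  · intro t
    have hzero : edist (⟨false, j t⟩ : GluePt Z) (⟨true, ψ (g t)⟩ : GluePt Z) = 0 := by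
      refine le_antisymm ?_ zero_le
      show M (j t) (ψ (g t)) ≤ 0
      refine le_trans (M_le _ _ t) ?_
      rw [edist_self, edist_self, add_zero]
    have hmk : SeparationQuotient.mk (⟨false, j t⟩ : GluePt Z) =
        SeparationQuotient.mk (⟨true, ψ (g t)⟩ : GluePt Z) := by
      rw [SeparationQuotient.mk_eq_mk]
      exact EMetric.inseparable_iff.2 hzero
    calc r (SeparationQuotient.mk (⟨false, j t⟩ : GluePt Z))
        = r (SeparationQuotient.mk (⟨true, ψ (g t)⟩ : GluePt Z)) := by rw [hmk]
      _ = g t := hret (g t)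

theorem linfty_sum_absolute_lipschitz_retract.{z, u, v}
    (lam : NNReal) (hlam : 1 ≤ lam) (ι : Type u)
    (X : ι → Type v) [∀ i, NormedAddCommGroup (X i)] [∀ i, NormedSpace ℝ (X i)]
    [∀ i, CompleteSpace (X i)]
    (h : ∀ i, IsAbsoluteLipschitzRetract.{z, v} lam (X i)) :
    IsAbsoluteLipschitzRetract.{z, max u v} lam (lp X ⊤) := by
  classical
  intro Z _ j hj
  have hnonempty : Nonempty (lp X ⊤) := ⟨0⟩
  -- single embeddings are isometric
  have hsingle_sub : ∀ (i : ι) (x y : X i),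
      (lp.single ⊤ i x - lp.single ⊤ i y : lp X ⊤) = lp.single ⊤ i (x - y) := by
    intro i x y
    refine lp.ext (funext fun k => ?_)
    simp only [lp.coeFn_sub, Pi.sub_apply]
    by_cases hk : k = i
    · subst hk
      rw [lp.single_apply_self, lp.single_apply_self, lp.single_apply_self]
    · rw [lp.single_apply_ne _ _ _ hk, lp.single_apply_ne _ _ _ hk,
        lp.single_apply_ne _ _ _ hk, sub_zero]
  have hnorm_single : ∀ (i : ι) (x : X i), ‖(lp.single ⊤ i x : lp X ⊤)‖ = ‖x‖ := by
    intro i x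
    refine le_antisymm ?_ ?_
    · refine lp.norm_le_of_forall_le (norm_nonneg x) fun k => ?_
      by_cases hk : k = i
      · subst hk; rw [lp.single_apply_self]
      · rw [lp.single_apply_ne _ _ _ hk, norm_zero]; exact norm_nonneg x
    · have := lp.norm_apply_le_norm ENNReal.top_ne_zero (lp.single ⊤ i x) i
      rwa [lp.single_apply_self] at this
  -- coordinate extensions
  have hFi : ∀ i : ι, ∃ F : Z → X i, LipschitzWith lam F ∧ ∀ f : lp X ⊤, F (j f) = f i := by
    intro i
    have hg : LipschitzWith 1 (fun f : lp X ⊤ => f i) := by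
      refine LipschitzWith.of_dist_le_mul fun f f' => ?_
      rw [NNReal.coe_one, one_mul, dist_eq_norm, dist_eq_norm]
      have := lp.norm_apply_le_norm ENNReal.top_ne_zero (f - f') i
      rwa [lp.coeFn_sub, Pi.sub_apply] at this
    have hψ : Isometry (fun x : X i => j (lp.single ⊤ i x)) := by
      refine Isometry.of_dist_eq fun x y => ?_
      rw [hj.dist_eq, dist_eq_norm, dist_eq_norm, hsingle_sub, hnorm_single]
    exact glue_extend lam (h i) j hj (fun f : lp X ⊤ => f i) hg
      (fun x : X i => j (lp.single ⊤ i x)) hψ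
  choose F hFlip hFret using hFi
  have hmem : ∀ z : Z, Memℓp (fun i => F i z) ⊤ := by
    intro z
    refine memℓp_infty ⟨(lam : ℝ) * dist z (j 0), ?_⟩
    rintro _ ⟨i, rfl⟩
    have h0 : F i (j 0) = 0 := by
      rw [hFret i 0, lp.coeFn_zero, Pi.zero_apply]
    calc ‖F i z‖ = dist (F i z) (F i (j 0)) := by rw [h0, dist_zero_right]
      _ ≤ (lam : ℝ) * dist z (j 0) := (hFlip i).dist_le_mul _ _
  refine ⟨fun z => ⟨fun i => F i z, hmem z⟩, ?_, ?_⟩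
  · refine LipschitzWith.of_dist_le_mul fun z z' => ?_
    rw [dist_eq_norm]
    refine lp.norm_le_of_forall_le (by positivity) fun i => ?_
    have : (⟨fun i => F i z, hmem z⟩ - ⟨fun i => F i z', hmem z'⟩ : lp X ⊤) i
        = F i z - F i z' := by
      rw [lp.coeFn_sub, Pi.sub_apply]
    rw [this, ← dist_eq_norm]
    exact (hFlip i).dist_le_mul _ _
  · intro f
    refine lp.ext (funext fun i => ?_)
    exact hFret i f
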